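/- arXiv:2509.22953 — 2 statements merged into one kernel-verified Lean document; each statement's English description precedes it below -/
import Mathlib

section
/- Rate double robustness bound: for every measurable ℓ : 𝒴 × 𝒳 → ℝ with |ℓ| ≤ B, the error of the doubly-robust risk is bounded by a product of nuisance L²-errors: |L_GDR(ℓ; π̂, ξ̂) − E[∫ ℓ(y, X) ξ(y | X) dν(y)]| ≤ (B √(ν(𝒴)) / ε) · ‖π_a − π̂‖_{L²(P)} · ‖ξ − ξ̂‖_{L²(P⊗ν)}, where ‖h‖_{L²(P)}² := E[h(X)²] and ‖k‖_{L²(P⊗ν)}² := E[∫ k(y, X)² dν(y)]. -/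
/-!
Write `g` and `ĝ` for the outcome regressions `x ↦ ∫ ℓ(y, x) ξ(y | x) dν(y)` and
`x ↦ ∫ ℓ(y, x) ξ̂(y | x) dν(y)`. The density identity, applied to `(ℓ − ĝ) / π̂`, turns the
inverse-propensity term of the doubly-robust risk into `E[π (g − ĝ) / π̂]`, so the error of the
risk is exactly `E[(π − π̂) / π̂ · (g − ĝ)]`: a product of the two nuisance errors. Bounding
`1 / π̂` by `1 / ε`, `|g − ĝ|` by `B √ν(𝒴) ‖ξ − ξ̂‖_{L²(ν)}` (Cauchy–Schwarz in `y`), and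
applying Cauchy–Schwarz in `ω` gives the bound.
-/

open MeasureTheory

section CauchySchwarz

variable {α : Type*} [MeasurableSpace α] {μ : Measure α}

theorem integral_mul_le_sqrt_mul_sqrt_of_nonneg {f g : α → ℝ} (hf₀ : 0 ≤ᵐ[μ] f)
    (hg₀ : 0 ≤ᵐ[μ] g) (hf : MemLp f 2 μ) (hg : MemLp g 2 μ) :
    ∫ x, f x * g x ∂μ ≤ √(∫ x, f x ^ 2 ∂μ) * √(∫ x, g x ^ 2 ∂μ) := by
  have h := integral_mul_le_Lp_mul_Lq_of_nonneg Real.HolderConjugate.two_two hf₀ hg₀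
    (by simpa using hf) (by simpa using hg)
  simpa only [Real.sqrt_eq_rpow, one_div, Real.rpow_two] using h

theorem integral_abs_le_sqrt_measure_mul_sqrt [IsFiniteMeasure μ] {h : α → ℝ}
    (hh : MemLp h 2 μ) : ∫ x, |h x| ∂μ ≤ √(μ.real Set.univ) * √(∫ x, h x ^ 2 ∂μ) := by
  have h := integral_mul_le_sqrt_mul_sqrt_of_nonneg (μ := μ) (f := fun _ => 1)
    (.of_forall fun _ => zero_le_one) (.of_forall fun x => abs_nonneg (h x)) (memLp_const 1) hh.abs
  simpa [sq_abs] using h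

theorem abs_integral_mul_le_mul_sqrt [IsFiniteMeasure μ] {ℓ h : α → ℝ} {B : ℝ} (hB : 0 ≤ B)
    (hℓB : ∀ x, |ℓ x| ≤ B) (hh : MemLp h 2 μ) :
    |∫ x, ℓ x * h x ∂μ| ≤ B * √(μ.real Set.univ) * √(∫ x, h x ^ 2 ∂μ) := by
  calc |∫ x, ℓ x * h x ∂μ| ≤ ∫ x, |ℓ x * h x| ∂μ := abs_integral_le_integral_abs
    _ ≤ ∫ x, B * |h x| ∂μ := by
        refine integral_mono_of_nonneg (.of_forall fun _ => abs_nonneg _)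
          ((hh.integrable one_le_two).abs.const_mul B) (.of_forall fun x => ?_)
        dsimp only
        rw [abs_mul]
        exact mul_le_mul_of_nonneg_right (hℓB x) (abs_nonneg _)
    _ = B * ∫ x, |h x| ∂μ := integral_const_mul B _
    _ ≤ B * √(μ.real Set.univ) * √(∫ x, h x ^ 2 ∂μ) := by
        rw [mul_assoc]
        exact mul_le_mul_of_nonneg_left (integral_abs_le_sqrt_measure_mul_sqrt hh) hB

theorem abs_integral_div_mul_le {u w v s : α → ℝ} {ε M : ℝ} (hε : 0 < ε) (hw : ∀ x, ε ≤ w x)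
    (hM : 0 ≤ M) (hu : MemLp u 2 μ) (hs : MemLp s 2 μ) (hs₀ : 0 ≤ᵐ[μ] s)
    (hvs : ∀ᵐ x ∂μ, |v x| ≤ M * s x) :
    |∫ x, u x / w x * v x ∂μ| ≤ ε⁻¹ * M * √(∫ x, u x ^ 2 ∂μ) * √(∫ x, s x ^ 2 ∂μ) := by
  have hpoint : ∀ᵐ x ∂μ, |u x / w x * v x| ≤ ε⁻¹ * M * (|u x| * s x) := by
    filter_upwards [hvs] with x hx
    rw [abs_mul, abs_div, abs_of_pos (hε.trans_le (hw x))]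
    calc |u x| / w x * |v x| ≤ |u x| / ε * (M * s x) :=
          mul_le_mul (div_le_div_of_nonneg_left (abs_nonneg _) hε (hw x)) hx (abs_nonneg _)
            (div_nonneg (abs_nonneg _) hε.le)
      _ = ε⁻¹ * M * (|u x| * s x) := by ring
  calc |∫ x, u x / w x * v x ∂μ| ≤ ∫ x, |u x / w x * v x| ∂μ := abs_integral_le_integral_abs
    _ ≤ ∫ x, ε⁻¹ * M * (|u x| * s x) ∂μ :=
        integral_mono_of_nonneg (.of_forall fun _ => abs_nonneg _)
          ((hu.abs.integrable_mul hs).const_mul _) hpoint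
    _ = ε⁻¹ * M * ∫ x, |u x| * s x ∂μ := integral_const_mul _ _
    _ ≤ ε⁻¹ * M * (√(∫ x, |u x| ^ 2 ∂μ) * √(∫ x, s x ^ 2 ∂μ)) :=
        mul_le_mul_of_nonneg_left (integral_mul_le_sqrt_mul_sqrt_of_nonneg
          (.of_forall fun _ => abs_nonneg _) hs₀ hu.abs hs) (by positivity)
    _ = ε⁻¹ * M * √(∫ x, u x ^ 2 ∂μ) * √(∫ x, s x ^ 2 ∂μ) := by simp only [sq_abs]; ring

end CauchySchwarz

section DoublyRobust

variable {Ω 𝒳 𝒴 : Type*} [MeasurableSpace 𝒴]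

noncomputable def condMean (ν : Measure 𝒴) (ξ ℓ : 𝒴 × 𝒳 → ℝ) (x : 𝒳) : ℝ :=
  ∫ y, ℓ (y, x) * ξ (y, x) ∂ν

def IsCondDensity [MeasurableSpace Ω] [MeasurableSpace 𝒳] (P : Measure Ω) (X : Ω → 𝒳)
    (A : Ω → Bool) (Y : Ω → 𝒴) (a : Bool) (π : 𝒳 → ℝ) (ν : Measure 𝒴) (ξ : 𝒴 × 𝒳 → ℝ) : Prop :=
  ∀ f : 𝒴 × 𝒳 → ℝ, Measurable f → (∃ B : ℝ, ∀ q, |f q| ≤ B) →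
    ∫ ω, (if A ω = a then (1 : ℝ) else 0) * f (Y ω, X ω) ∂P
      = ∫ ω, π (X ω) * condMean ν ξ f (X ω) ∂P

noncomputable def gdrRisk [MeasurableSpace Ω] (P : Measure Ω) (X : Ω → 𝒳) (A : Ω → Bool)
    (Y : Ω → 𝒴) (a : Bool) (πh : 𝒳 → ℝ) (ℓ : 𝒴 × 𝒳 → ℝ) (r : 𝒳 → ℝ) : ℝ :=
  ∫ ω, ((if A ω = a then (1 : ℝ) else 0) / πh (X ω)) * ℓ (Y ω, X ω)
    + (1 - (if A ω = a then (1 : ℝ) else 0) / πh (X ω)) * r (X ω) ∂P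

variable {ν : Measure 𝒴} [IsFiniteMeasure ν] {ξ ℓ : 𝒴 × 𝒳 → ℝ} {B K : ℝ}

theorem abs_condMean_le (hξK : ∀ q, |ξ q| ≤ K) (hℓB : ∀ q, |ℓ q| ≤ B) (x : 𝒳) :
    |condMean ν ξ ℓ x| ≤ B * K * ν.real Set.univ := by
  rw [condMean, ← Real.norm_eq_abs]
  refine norm_integral_le_of_norm_le_const (.of_forall fun y => ?_)
  rw [Real.norm_eq_abs, abs_mul]
  exact mul_le_mul (hℓB _) (hξK _) (abs_nonneg _) ((abs_nonneg _).trans (hℓB (y, x)))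

variable [MeasurableSpace 𝒳]

theorem integrable_section_of_abs_le {f : 𝒴 × 𝒳 → ℝ} (hf : Measurable f) {M : ℝ}
    (hfM : ∀ q, |f q| ≤ M) (x : 𝒳) : Integrable (fun y => f (y, x)) ν :=
  .of_bound (hf.comp measurable_prodMk_right).aestronglyMeasurable M (.of_forall fun _ => hfM _)

theorem integrable_mul_section (hξ : Measurable ξ) (hξK : ∀ q, |ξ q| ≤ K) (hℓ : Measurable ℓ)
    (hℓB : ∀ q, |ℓ q| ≤ B) (x : 𝒳) : Integrable (fun y => ℓ (y, x) * ξ (y, x)) ν :=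
  (integrable_section_of_abs_le hξ hξK x).bdd_mul
    (hℓ.comp measurable_prodMk_right).aestronglyMeasurable (.of_forall fun _ => hℓB _)

theorem measurable_condMean (hξ : Measurable ξ) (hℓ : Measurable ℓ) :
    Measurable (condMean ν ξ ℓ) :=
  (hℓ.mul hξ).stronglyMeasurable.integral_prod_left'.measurable

theorem abs_condMean_sub_condMean_le {ξ' : 𝒴 × 𝒳 → ℝ} (hξ : Measurable ξ) (hξ' : Measurable ξ')
    (hξK : ∀ q, |ξ q| ≤ K) (hξK' : ∀ q, |ξ' q| ≤ K) (hℓ : Measurable ℓ) (hB : 0 ≤ B)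
    (hℓB : ∀ q, |ℓ q| ≤ B) (x : 𝒳) :
    |condMean ν ξ ℓ x - condMean ν ξ' ℓ x|
      ≤ B * √(ν.real Set.univ) * √(∫ y, (ξ (y, x) - ξ' (y, x)) ^ 2 ∂ν) := by
  have hsub : condMean ν ξ ℓ x - condMean ν ξ' ℓ x
      = ∫ y, ℓ (y, x) * (ξ (y, x) - ξ' (y, x)) ∂ν := by
    simp only [condMean, mul_sub]
    exact (integral_sub (integrable_mul_section hξ hξK hℓ hℓB x)
      (integrable_mul_section hξ' hξK' hℓ hℓB x)).symm
  have hdiff : MemLp (fun y => ξ (y, x) - ξ' (y, x)) 2 ν :=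
    .of_bound ((hξ.sub hξ').comp measurable_prodMk_right).aestronglyMeasurable (K + K)
      (.of_forall fun _ => (abs_sub _ _).trans (add_le_add (hξK _) (hξK' _)))
  rw [hsub]
  exact abs_integral_mul_le_mul_sqrt hB (fun _ => hℓB _) hdiff

theorem condMean_mul_sub (hξ : Measurable ξ) (hξK : ∀ q, |ξ q| ≤ K)
    (hξnorm : ∀ x, ∫ y, ξ (y, x) ∂ν = 1) (hℓ : Measurable ℓ) (hℓB : ∀ q, |ℓ q| ≤ B)
    (ψ r : 𝒳 → ℝ) (x : 𝒳) :
    condMean ν ξ (fun q => ψ q.2 * (ℓ q - r q.2)) x = ψ x * (condMean ν ξ ℓ x - r x) := by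
  calc condMean ν ξ (fun q => ψ q.2 * (ℓ q - r q.2)) x
      = ∫ y, ψ x * (ℓ (y, x) * ξ (y, x) - r x * ξ (y, x)) ∂ν := by
        simp only [condMean]; congr 1; ext y; ring
    _ = ψ x * (condMean ν ξ ℓ x - r x * ∫ y, ξ (y, x) ∂ν) := by
        rw [integral_const_mul, integral_sub (integrable_mul_section hξ hξK hℓ hℓB x)
          ((integrable_section_of_abs_le hξ hξK x).const_mul _), integral_const_mul, condMean]
    _ = ψ x * (condMean ν ξ ℓ x - r x) := by rw [hξnorm, mul_one]

variable [MeasurableSpace Ω] {P : Measure Ω} {X : Ω → 𝒳} {A : Ω → Bool} {Y : Ω → 𝒴} {a : Bool}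
  {π : 𝒳 → ℝ}

theorem IsCondDensity.integral_mul_sub_eq (hdens : IsCondDensity P X A Y a π ν ξ)
    (hξ : Measurable ξ) (hξK : ∀ q, |ξ q| ≤ K) (hξnorm : ∀ x, ∫ y, ξ (y, x) ∂ν = 1)
    (hℓ : Measurable ℓ) (hℓB : ∀ q, |ℓ q| ≤ B) {ψ r : 𝒳 → ℝ} {M R : ℝ} (hψ : Measurable ψ)
    (hψM : ∀ x, |ψ x| ≤ M) (hr : Measurable r) (hrR : ∀ x, |r x| ≤ R) :
    ∫ ω, (if A ω = a then (1 : ℝ) else 0) * (ψ (X ω) * (ℓ (Y ω, X ω) - r (X ω))) ∂P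
      = ∫ ω, π (X ω) * (ψ (X ω) * (condMean ν ξ ℓ (X ω) - r (X ω))) ∂P := by
  have hbound : ∀ q : 𝒴 × 𝒳, |ψ q.2 * (ℓ q - r q.2)| ≤ M * (B + R) := fun q => by
    rw [abs_mul]
    exact mul_le_mul (hψM _) ((abs_sub _ _).trans (add_le_add (hℓB _) (hrR _))) (abs_nonneg _)
      ((abs_nonneg _).trans (hψM q.2))
  rw [hdens _ (by fun_prop) ⟨_, hbound⟩]
  simp only [condMean_mul_sub hξ hξK hξnorm hℓ hℓB]

theorem memLp_sqrt_integral_sq_sub {ξ' : 𝒴 × 𝒳 → ℝ} [IsFiniteMeasure P] (hX : Measurable X)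
    (hξ : Measurable ξ) (hξ' : Measurable ξ') (hξK : ∀ q, |ξ q| ≤ K) (hξK' : ∀ q, |ξ' q| ≤ K) :
    MemLp (fun ω => √(∫ y, (ξ (y, X ω) - ξ' (y, X ω)) ^ 2 ∂ν)) 2 P := by
  have hk : Measurable fun x => ∫ y, (ξ (y, x) - ξ' (y, x)) ^ 2 ∂ν :=
    ((hξ.sub hξ').pow_const 2).stronglyMeasurable.integral_prod_left'.measurable
  refine .of_bound (hk.comp hX).sqrt.aestronglyMeasurable √((K + K) ^ 2 * ν.real Set.univ)
    (.of_forall fun ω => ?_)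
  rw [Real.norm_eq_abs, abs_of_nonneg (Real.sqrt_nonneg _)]
  refine Real.sqrt_le_sqrt ((Real.le_norm_self _).trans
    (norm_integral_le_of_norm_le_const (.of_forall fun y => ?_)))
  rw [Real.norm_eq_abs, abs_pow]
  exact pow_le_pow_left₀ (abs_nonneg _) ((abs_sub _ _).trans (add_le_add (hξK _) (hξK' _))) 2

theorem gdrRisk_sub_integral_condMean [IsFiniteMeasure P] (hdens : IsCondDensity P X A Y a π ν ξ)
    (hX : Measurable X) (hA : Measurable A) (hY : Measurable Y) (hπ : Measurable π)
    (hπ1 : ∀ᵐ ω ∂P, |π (X ω)| ≤ 1) (hξ : Measurable ξ) (hξK : ∀ q, |ξ q| ≤ K)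
    (hξnorm : ∀ x, ∫ y, ξ (y, x) ∂ν = 1) (hℓ : Measurable ℓ) (hℓB : ∀ q, |ℓ q| ≤ B)
    {πh r : 𝒳 → ℝ} {ε R : ℝ} (hπh : Measurable πh) (hε : 0 < ε) (hπhε : ∀ x, ε ≤ πh x)
    (hr : Measurable r) (hrR : ∀ x, |r x| ≤ R) :
    gdrRisk P X A Y a πh ℓ r - ∫ ω, condMean ν ξ ℓ (X ω) ∂P
      = ∫ ω, (π (X ω) - πh (X ω)) / πh (X ω) * (condMean ν ξ ℓ (X ω) - r (X ω)) ∂P := by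
  have hπh₀ : ∀ x, 0 < πh x := fun x => hε.trans_le (hπhε x)
  have hψ : ∀ x, |(πh x)⁻¹| ≤ ε⁻¹ := fun x => by
    rw [abs_inv, abs_of_pos (hπh₀ x)]
    exact inv_anti₀ hε (hπhε x)
  have hipw := hdens.integral_mul_sub_eq hξ hξK hξnorm hℓ hℓB (ψ := fun x => (πh x)⁻¹)
    hπh.inv hψ hr hrR
  set I : Ω → ℝ := fun ω => if A ω = a then 1 else 0
  set g := condMean ν ξ ℓ
  have hI : ∀ ω, ‖I ω‖ ≤ 1 := fun ω => by by_cases h : A ω = a <;> simp [I, h]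
  have hr_int : Integrable (fun ω => r (X ω)) P :=
    .of_bound (hr.comp hX).aestronglyMeasurable R (.of_forall fun _ => hrR _)
  have hg_int : Integrable (fun ω => g (X ω)) P :=
    .of_bound ((measurable_condMean hξ hℓ).comp hX).aestronglyMeasurable _
      (.of_forall fun _ => abs_condMean_le hξK hℓB _)
  have hℓ_int : Integrable (fun ω => ℓ (Y ω, X ω)) P :=
    .of_bound (hℓ.comp (hY.prodMk hX)).aestronglyMeasurable B (.of_forall fun _ => hℓB _)
  have hipw_int : Integrable (fun ω => I ω * ((πh (X ω))⁻¹ * (ℓ (Y ω, X ω) - r (X ω)))) P :=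
    ((hℓ_int.sub hr_int).bdd_mul (hπh.comp hX).inv.aestronglyMeasurable
      (.of_forall fun _ => hψ _)).bdd_mul
      (measurable_const.ite (hA (measurableSet_singleton a)) measurable_const).aestronglyMeasurable
      (.of_forall hI)
  have hres_int : Integrable (fun ω => g (X ω) - r (X ω)) P := hg_int.sub hr_int
  have hreg_int : Integrable (fun ω => π (X ω) * ((πh (X ω))⁻¹ * (g (X ω) - r (X ω)))) P :=
    (hres_int.bdd_mul (hπh.comp hX).inv.aestronglyMeasurable
      (.of_forall fun _ => hψ _)).bdd_mul (hπ.comp hX).aestronglyMeasurable hπ1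
  calc (∫ ω, I ω / πh (X ω) * ℓ (Y ω, X ω) + (1 - I ω / πh (X ω)) * r (X ω) ∂P)
        - ∫ ω, g (X ω) ∂P
      = (∫ ω, r (X ω) ∂P + ∫ ω, I ω * ((πh (X ω))⁻¹ * (ℓ (Y ω, X ω) - r (X ω))) ∂P)
        - ∫ ω, g (X ω) ∂P := by
        rw [← integral_add hr_int hipw_int]
        congr 2; ext ω; ring
    _ = ∫ ω, π (X ω) * ((πh (X ω))⁻¹ * (g (X ω) - r (X ω))) ∂P
        - (∫ ω, g (X ω) ∂P - ∫ ω, r (X ω) ∂P) := by rw [hipw]; ring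
    _ = ∫ ω, (π (X ω) - πh (X ω)) / πh (X ω) * (g (X ω) - r (X ω)) ∂P := by
        rw [← integral_sub hg_int hr_int, ← integral_sub hreg_int hres_int]
        congr 1; ext ω
        field_simp [(hπh₀ (X ω)).ne']

end DoublyRobust

theorem gdr_rate_double_robustness_general
    {Ω : Type*} [MeasurableSpace Ω]
    (P : Measure Ω) [IsProbabilityMeasure P]
    {𝒳 : Type*} [MeasurableSpace 𝒳]
    {𝒴 : Type*} [MeasurableSpace 𝒴]
    (X : Ω → 𝒳) (hX : Measurable X)
    (A : Ω → Bool) (hA : Measurable A)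
    (Y : Ω → 𝒴) (hY : Measurable Y)
    (a : Bool)
    -- propensity score: σ(X)-measurable version of E[𝟙{A = a} | σ(X)]
    (π : 𝒳 → ℝ) (hπmeas : Measurable π)
    -- strong overlap
    (ε : ℝ) (hε : 0 < ε)
    (hoverlap : ∀ᵐ ω ∂P, ε ≤ π (X ω) ∧ π (X ω) ≤ 1 - ε)
    -- density setup
    (ν : Measure 𝒴) [IsFiniteMeasure ν]
    (c C : ℝ)
    (ξ : 𝒴 × 𝒳 → ℝ) (hξmeas : Measurable ξ)
    (hξmem : ∀ q, ξ q ∈ Set.Icc c C)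
    (hξnorm : ∀ x, ∫ y, ξ (y, x) ∂ν = 1)
    -- ξ is the conditional outcome density
    (hξdens : ∀ f : 𝒴 × 𝒳 → ℝ, Measurable f → (∃ B : ℝ, ∀ q, |f q| ≤ B) →
      ∫ ω, (if A ω = a then (1 : ℝ) else 0) * f (Y ω, X ω) ∂P
        = ∫ ω, π (X ω) * ∫ y, f (y, X ω) * ξ (y, X ω) ∂ν ∂P)
    -- nuisance estimates
    (πh : 𝒳 → ℝ) (hπhmeas : Measurable πh) (hπhmem : ∀ x, πh x ∈ Set.Icc ε 1)
    (ξh : 𝒴 × 𝒳 → ℝ) (hξhmeas : Measurable ξh)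
    (hξhmem : ∀ q, ξh q ∈ Set.Icc c C) :
    ∀ (B : ℝ) (ℓ : 𝒴 × 𝒳 → ℝ), Measurable ℓ → (∀ q, |ℓ q| ≤ B) →
      |(∫ ω, ((if A ω = a then (1 : ℝ) else 0) / πh (X ω)) * ℓ (Y ω, X ω)
          + (1 - (if A ω = a then (1 : ℝ) else 0) / πh (X ω))
            * ∫ y, ℓ (y, X ω) * ξh (y, X ω) ∂ν ∂P)
        - ∫ ω, ∫ y, ℓ (y, X ω) * ξ (y, X ω) ∂ν ∂P|
      ≤ (B * Real.sqrt ((ν Set.univ).toReal) / ε)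
          * Real.sqrt (∫ ω, (π (X ω) - πh (X ω)) ^ 2 ∂P)
          * Real.sqrt (∫ ω, ∫ y, (ξ (y, X ω) - ξh (y, X ω)) ^ 2 ∂ν ∂P) := by
  intro B ℓ hℓ hℓB
  obtain ⟨ω₀⟩ := nonempty_of_isProbabilityMeasure P
  have hB : 0 ≤ B := (abs_nonneg _).trans (hℓB (Y ω₀, X ω₀))
  have hξK : ∀ q, |ξ q| ≤ max |c| |C| := fun q => abs_le_max_abs_abs (hξmem q).1 (hξmem q).2
  have hξhK : ∀ q, |ξh q| ≤ max |c| |C| := fun q => abs_le_max_abs_abs (hξhmem q).1 (hξhmem q).2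
  have hπ1 : ∀ᵐ ω ∂P, |π (X ω)| ≤ 1 := by
    filter_upwards [hoverlap] with ω hω
    exact abs_le.2 ⟨by linarith [hω.1], by linarith [hω.2]⟩
  have hπdiff : MemLp (fun ω => π (X ω) - πh (X ω)) 2 P := by
    refine .of_bound ((hπmeas.comp hX).sub (hπhmeas.comp hX)).aestronglyMeasurable 2 ?_
    filter_upwards [hπ1] with ω hω
    have := hπhmem (X ω)
    exact (abs_sub _ _).trans (by rw [abs_of_pos (hε.trans_le this.1)]; linarith [this.2])
  have hrem := gdrRisk_sub_integral_condMean hξdens hX hA hY hπmeas hπ1 hξmeas hξK hξnorm hℓ hℓB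
    hπhmeas hε (fun x => (hπhmem x).1) (measurable_condMean (ν := ν) hξhmeas hℓ)
    (abs_condMean_le hξhK hℓB)
  calc _ = |∫ ω, (π (X ω) - πh (X ω)) / πh (X ω)
              * (condMean ν ξ ℓ (X ω) - condMean ν ξh ℓ (X ω)) ∂P| := congrArg abs hrem
    _ ≤ ε⁻¹ * (B * √(ν.real Set.univ)) * √(∫ ω, (π (X ω) - πh (X ω)) ^ 2 ∂P)
          * √(∫ ω, √(∫ y, (ξ (y, X ω) - ξh (y, X ω)) ^ 2 ∂ν) ^ 2 ∂P) :=
        abs_integral_div_mul_le hε (fun _ => (hπhmem _).1) (by positivity) hπdiff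
          (memLp_sqrt_integral_sq_sub hX hξmeas hξhmeas hξK hξhK)
          (.of_forall fun _ => Real.sqrt_nonneg _)
          (.of_forall fun _ => abs_condMean_sub_condMean_le hξmeas hξhmeas hξK hξhK hℓ hB hℓB _)
    _ = _ := by
        simp only [Real.sq_sqrt (integral_nonneg fun _ => sq_nonneg _)]
        rw [Measure.real]
        ring

/-- Rate double robustness bound: for every measurable `ℓ : 𝒴 × 𝒳 → ℝ` with
`|ℓ| ≤ B`, the error of the doubly-robust risk is bounded by a product of nuisance L²-errors:
`|L_GDR(ℓ; π̂, ξ̂) − E[∫ ℓ(y, X) ξ(y | X) dν(y)]|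
   ≤ (B √(ν(𝒴)) / ε) · ‖π_a − π̂‖_{L²(P)} · ‖ξ − ξ̂‖_{L²(P⊗ν)}`. -/
theorem gdr_rate_double_robustness
    {Ω : Type*} [MeasurableSpace Ω]
    (P : Measure Ω) [IsProbabilityMeasure P]
    {𝒳 : Type*} [MeasurableSpace 𝒳] [StandardBorelSpace 𝒳]
    {𝒴 : Type*} [MeasurableSpace 𝒴] [StandardBorelSpace 𝒴]
    (X : Ω → 𝒳) (hX : Measurable X)
    (A : Ω → Bool) (hA : Measurable A)
    (Y : Ω → 𝒴) (hY : Measurable Y)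
    (a : Bool)
    -- propensity score: σ(X)-measurable version of E[𝟙{A = a} | σ(X)]
    (π : 𝒳 → ℝ) (hπmeas : Measurable π)
    (hπver : P[fun ω => (if A ω = a then (1 : ℝ) else 0) |
        MeasurableSpace.comap X inferInstance] =ᵐ[P] fun ω => π (X ω))
    -- strong overlap
    (ε : ℝ) (hε : 0 < ε)
    (hoverlap : ∀ᵐ ω ∂P, ε ≤ π (X ω) ∧ π (X ω) ≤ 1 - ε)
    -- density setup
    (ν : Measure 𝒴) [IsFiniteMeasure ν]
    (c C : ℝ) (hc : 0 < c) (hcC : c ≤ C)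
    (ξ : 𝒴 × 𝒳 → ℝ) (hξmeas : Measurable ξ)
    (hξmem : ∀ q, ξ q ∈ Set.Icc c C)
    (hξnorm : ∀ x, ∫ y, ξ (y, x) ∂ν = 1)
    -- ξ is the conditional outcome density
    (hξdens : ∀ f : 𝒴 × 𝒳 → ℝ, Measurable f → (∃ B : ℝ, ∀ q, |f q| ≤ B) →
      ∫ ω, (if A ω = a then (1 : ℝ) else 0) * f (Y ω, X ω) ∂P
        = ∫ ω, π (X ω) * ∫ y, f (y, X ω) * ξ (y, X ω) ∂ν ∂P)
    -- nuisance estimates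
    (πh : 𝒳 → ℝ) (hπhmeas : Measurable πh) (hπhmem : ∀ x, πh x ∈ Set.Icc ε 1)
    (ξh : 𝒴 × 𝒳 → ℝ) (hξhmeas : Measurable ξh)
    (hξhmem : ∀ q, ξh q ∈ Set.Icc c C)
    (hξhnorm : ∀ x, ∫ y, ξh (y, x) ∂ν = 1) :
    ∀ (B : ℝ) (ℓ : 𝒴 × 𝒳 → ℝ), Measurable ℓ → (∀ q, |ℓ q| ≤ B) →
      |(∫ ω, ((if A ω = a then (1 : ℝ) else 0) / πh (X ω)) * ℓ (Y ω, X ω)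
          + (1 - (if A ω = a then (1 : ℝ) else 0) / πh (X ω))
            * ∫ y, ℓ (y, X ω) * ξh (y, X ω) ∂ν ∂P)
        - ∫ ω, ∫ y, ℓ (y, X ω) * ξ (y, X ω) ∂ν ∂P|
      ≤ (B * Real.sqrt ((ν Set.univ).toReal) / ε)
          * Real.sqrt (∫ ω, (π (X ω) - πh (X ω)) ^ 2 ∂P)
          * Real.sqrt (∫ ω, ∫ y, (ξ (y, X ω) - ξh (y, X ω)) ^ 2 ∂ν ∂P) :=
  gdr_rate_double_robustness_general P X hX A hA Y hY a π hπmeas ε hε hoverlap ν c C ξ hξmeas hξmem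
    hξnorm hξdens πh hπhmeas hπhmem ξh hξhmeas hξhmem
end

section
/- Neyman-orthogonality of the GDR risk for conditional GANs (with the optimal discriminator plugged in): let p*, p : 𝒴 × 𝒳 → [c, C] be measurable candidate generator densities (∫ p*(y|x) dν(y) = ∫ p(y|x) dν(y) = 1 for all x). For s, t near 0 define π_s := π_a + s(π̂ − π_a), ξ_s := ξ + s(ξ̂ − ξ), the perturbed pseudo-density ξ̃_s(X, A, y) := (𝟙{A = a}/π_s(X))(ξ(y|X) − ξ_s(y|X)) + ξ_s(y|X), the perturbed target p_t := p* + t(p − p*), and G(s, t) := E[∫ ( ξ̃_s(X, A, y) · log(ξ̃_s(X, A, y)/(ξ̃_s(X, A, y) + p_t(y|X))) + p_t(y|X) · log(p_t(y|X)/(ξ̃_s(X, A, y) + p_t(y|X))) ) dν(y)]. Then there is δ > 0 such that G is well defined for |s|, |t| < δ and the mixed pathwise derivative vanishes: (d/ds)|_{s=0} (d/dt)|_{t=0} G(s, t) = 0. -/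
/-!
At the optimal discriminator the GAN risk is `G(s, t) = E ∫ φ(ξ̃_s, p_t) dν` with
`φ(u, v) = u log (u / (u + v)) + v log (v / (u + v))`, and `∂ᵥφ(u, v) = log v - log (u + v)`.
For small `s, t` every perturbed density stays in the box `[c/2, C + c/2]`, where `φ`, `∂ᵥφ` and
the `s`-derivative of `ξ̃_s` are bounded, so both derivatives pass under the integral and the mixed
derivative is `-E ∫ (p - p*) ∂ₛξ̃₀ / (ξ + p*) dν`. At `s = 0` the pseudo-density has derivative
`(1 - 𝟙{A = a} / π(X)) (ξ̂ - ξ)`, so the mixed derivative is `E[(𝟙{A = a} / π(X) - 1) g(X)]` for a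
bounded `g`. It vanishes because `π` is the propensity score: `E[𝟙{A = a} h(X)] = E[π(X) h(X)]`.
-/

open MeasureTheory ProbabilityTheory Set Filter Topology
open Real (log)

/-- The integrand of the GAN risk at the optimal discriminator `d* = u / (u + v)`. -/
noncomputable def ganLoss (u v : ℝ) : ℝ := u * log (u / (u + v)) + v * log (v / (u + v))

lemma ganLoss_eq {u v : ℝ} (hu : 0 < u) (hv : 0 < v) :
    ganLoss u v = u * log u + v * log v - (u + v) * log (u + v) := by
  rw [ganLoss, Real.log_div hu.ne' (by positivity), Real.log_div hv.ne' (by positivity)]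
  ring

lemma hasDerivAt_ganLoss_right {u v : ℝ} (hu : 0 < u) (hv : 0 < v) :
    HasDerivAt (ganLoss u) (log v - log (u + v)) v := by
  have h := ((Real.hasDerivAt_mul_log hv.ne').const_add (u * log u)).sub
    ((Real.hasDerivAt_mul_log (add_pos hu hv).ne').comp v ((hasDerivAt_id v).const_add u))
  refine (h.congr_deriv (by simp)).congr_of_eventuallyEq ?_
  filter_upwards [Ioi_mem_nhds hv] with x hx
  exact ganLoss_eq hu hx

lemma continuousAt_ganLoss {u v : ℝ} (hu : 0 < u) (hv : 0 < v) :
    ContinuousAt (Function.uncurry ganLoss) (u, v) := by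
  have huv : u + v ≠ 0 := by positivity
  unfold ganLoss Function.uncurry
  fun_prop (disch := first
    | positivity | exact div_ne_zero hu.ne' huv | exact div_ne_zero hv.ne' huv)

@[fun_prop]
lemma Measurable.ganLoss {α : Type*} [MeasurableSpace α] {u v : α → ℝ} (hu : Measurable u)
    (hv : Measurable v) : Measurable fun z => ganLoss (u z) (v z) := by
  unfold _root_.ganLoss; fun_prop

lemma exists_abs_le_of_continuousAt {f : ℝ → ℝ → ℝ}
    (hf : ∀ u v, 0 < u → 0 < v → ContinuousAt (Function.uncurry f) (u, v)) {L U : ℝ}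
    (hL : 0 < L) : ∃ K, ∀ u ∈ Icc L U, ∀ v ∈ Icc L U, |f u v| ≤ K := by
  obtain ⟨K, hK⟩ := (isCompact_Icc.prod isCompact_Icc).exists_bound_of_continuousOn
    fun q hq => (hf q.1 q.2 (hL.trans_le hq.1.1) (hL.trans_le hq.2.1)).continuousWithinAt
  exact ⟨K, fun u hu v hv => hK (u, v) ⟨hu, hv⟩⟩

lemma exists_abs_ganLoss_le {L U : ℝ} (hL : 0 < L) :
    ∃ K, ∀ u ∈ Icc L U, ∀ v ∈ Icc L U, |ganLoss u v| ≤ K :=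
  exists_abs_le_of_continuousAt (fun _ _ => continuousAt_ganLoss) hL

lemma exists_abs_log_sub_log_add_le {L U : ℝ} (hL : 0 < L) :
    ∃ K, ∀ u ∈ Icc L U, ∀ v ∈ Icc L U, |log v - log (u + v)| ≤ K :=
  exists_abs_le_of_continuousAt (fun u v hu hv => by
    have huv : u + v ≠ 0 := by positivity
    unfold Function.uncurry
    fun_prop (disch := first | positivity | exact huv)) hL

/-- `ξ̃_s` at one point: `i = 𝟙{A = a}`, and the nuisances move from `(π₀, ξ₀)` towards
`(π₁, ξ₁)`. -/
noncomputable def pseudoDensity (i π₀ π₁ ξ₀ ξ₁ s : ℝ) : ℝ :=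
  i / (π₀ + s * (π₁ - π₀)) * (ξ₀ - (ξ₀ + s * (ξ₁ - ξ₀))) + (ξ₀ + s * (ξ₁ - ξ₀))

noncomputable def pseudoDensityDeriv (i π₀ π₁ ξ₀ ξ₁ s : ℝ) : ℝ :=
  (ξ₁ - ξ₀) * (1 - i * π₀ / (π₀ + s * (π₁ - π₀)) ^ 2)

@[fun_prop]
lemma Measurable.pseudoDensity {α : Type*} [MeasurableSpace α] {i π₀ π₁ ξ₀ ξ₁ s : α → ℝ}
    (hi : Measurable i) (hπ₀ : Measurable π₀) (hπ₁ : Measurable π₁) (hξ₀ : Measurable ξ₀)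
    (hξ₁ : Measurable ξ₁) (hs : Measurable s) :
    Measurable fun z => pseudoDensity (i z) (π₀ z) (π₁ z) (ξ₀ z) (ξ₁ z) (s z) := by
  unfold _root_.pseudoDensity; fun_prop

@[fun_prop]
lemma Measurable.pseudoDensityDeriv {α : Type*} [MeasurableSpace α] {i π₀ π₁ ξ₀ ξ₁ s : α → ℝ}
    (hi : Measurable i) (hπ₀ : Measurable π₀) (hπ₁ : Measurable π₁) (hξ₀ : Measurable ξ₀)
    (hξ₁ : Measurable ξ₁) (hs : Measurable s) :
    Measurable fun z => pseudoDensityDeriv (i z) (π₀ z) (π₁ z) (ξ₀ z) (ξ₁ z) (s z) := by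
  unfold _root_.pseudoDensityDeriv; fun_prop

section pseudoDensity

variable {i π₀ π₁ ξ₀ ξ₁ s : ℝ}

@[simp]
lemma pseudoDensity_zero : pseudoDensity i π₀ π₁ ξ₀ ξ₁ 0 = ξ₀ := by
  simp [pseudoDensity]

@[simp]
lemma pseudoDensityDeriv_zero :
    pseudoDensityDeriv i π₀ π₁ ξ₀ ξ₁ 0 = (ξ₁ - ξ₀) * (1 - i / π₀) := by
  rcases eq_or_ne π₀ 0 with h | h
  · simp [pseudoDensityDeriv, h]
  · simp only [pseudoDensityDeriv, zero_mul, add_zero]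
    field_simp

lemma pseudoDensity_sub_eq :
    pseudoDensity i π₀ π₁ ξ₀ ξ₁ s - ξ₀ = s * (ξ₁ - ξ₀) * (1 - i / (π₀ + s * (π₁ - π₀))) := by
  rw [pseudoDensity]; ring

lemma hasDerivAt_pseudoDensity (h : π₀ + s * (π₁ - π₀) ≠ 0) :
    HasDerivAt (pseudoDensity i π₀ π₁ ξ₀ ξ₁) (pseudoDensityDeriv i π₀ π₁ ξ₀ ξ₁ s) s := by
  have hpath : ∀ b k : ℝ, HasDerivAt (fun s => b + s * k) k s := fun b k => by
    simpa using ((hasDerivAt_id s).mul_const k).const_add b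
  have hfun : pseudoDensity i π₀ π₁ ξ₀ ξ₁ = (fun s => i * (ξ₀ - (ξ₀ + s * (ξ₁ - ξ₀))))
      / (fun s => π₀ + s * (π₁ - π₀)) + fun s => ξ₀ + s * (ξ₁ - ξ₀) := by
    funext s; simp only [pseudoDensity, Pi.add_apply, Pi.div_apply]; ring
  rw [hfun]
  refine ((((hpath ξ₀ (ξ₁ - ξ₀)).const_sub ξ₀).const_mul i).div (hpath π₀ (π₁ - π₀)) h).add
    (hpath ξ₀ (ξ₁ - ξ₀)) |>.congr_deriv ?_
  rw [pseudoDensityDeriv]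
  field_simp
  ring

lemma abs_one_sub_le_one_add {x b : ℝ} (h₀ : 0 ≤ x) (hb : x ≤ b) : |1 - x| ≤ 1 + b :=
  abs_le.2 ⟨by linarith, by linarith⟩

variable {ε c C : ℝ}

lemma mem_Icc_of_abs_sub_le {x x₀ : ℝ} (hx₀ : x₀ ∈ Icc c C) (h : |x - x₀| ≤ c / 2) :
    x ∈ Icc (c / 2) (C + c / 2) := by
  constructor <;> linarith [abs_le.1 h, hx₀.1, hx₀.2]

lemma add_mul_sub_mem_Icc (hξ₀ : ξ₀ ∈ Icc c C) (hξ₁ : ξ₁ ∈ Icc c C)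
    (hs : |s| * (C - c) ≤ c / 2) : ξ₀ + s * (ξ₁ - ξ₀) ∈ Icc (c / 2) (C + c / 2) := by
  refine mem_Icc_of_abs_sub_le hξ₀ ?_
  rw [add_sub_cancel_left, abs_mul]
  exact (mul_le_mul_of_nonneg_left (abs_sub_le_of_le_of_le hξ₁.1 hξ₁.2 hξ₀.1 hξ₀.2)
    (abs_nonneg s)).trans hs

lemma half_le_add_mul_sub (hπ₀ : π₀ ∈ Icc ε 1) (hπ₁ : π₁ ∈ Icc 0 1) (hε : 0 < ε)
    (hs : |s| ≤ ε / 2) : ε / 2 ≤ π₀ + s * (π₁ - π₀) := by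
  have h : |s * (π₁ - π₀)| ≤ ε / 2 := by
    rw [abs_mul]
    exact (mul_le_of_le_one_right (abs_nonneg s)
      (abs_le.2 ⟨by linarith [hπ₁.1, hπ₀.2], by linarith [hπ₁.2, hπ₀.1]⟩)).trans hs
  linarith [neg_abs_le (s * (π₁ - π₀)), hπ₀.1]

lemma pseudoDensity_mem_Icc (hi : i ∈ Icc 0 1) (hε : 0 < ε) (hπs : ε / 2 ≤ π₀ + s * (π₁ - π₀))
    (hξ₀ : ξ₀ ∈ Icc c C) (hξ₁ : ξ₁ ∈ Icc c C) (hs : |s| * ((C - c) * (1 + 2 / ε)) ≤ c / 2) :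
    pseudoDensity i π₀ π₁ ξ₀ ξ₁ s ∈ Icc (c / 2) (C + c / 2) := by
  have hπpos : 0 < π₀ + s * (π₁ - π₀) := by linarith
  have hweight : |1 - i / (π₀ + s * (π₁ - π₀))| ≤ 1 + 2 / ε := by
    refine abs_one_sub_le_one_add (div_nonneg hi.1 hπpos.le) ?_
    rw [div_le_div_iff₀ hπpos hε]
    nlinarith [hi.2]
  refine mem_Icc_of_abs_sub_le hξ₀ ?_
  rw [pseudoDensity_sub_eq, abs_mul, abs_mul, mul_assoc]
  refine (mul_le_mul_of_nonneg_left ?_ (abs_nonneg s)).trans hs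
  exact mul_le_mul (abs_sub_le_of_le_of_le hξ₁.1 hξ₁.2 hξ₀.1 hξ₀.2) hweight (abs_nonneg _)
    (by linarith [hξ₀.1, hξ₀.2])

lemma abs_pseudoDensityDeriv_le (hi : i ∈ Icc 0 1) (hε : 0 < ε) (hπ₀ : π₀ ∈ Icc ε 1)
    (hπs : ε / 2 ≤ π₀ + s * (π₁ - π₀)) (hξ₀ : ξ₀ ∈ Icc c C) (hξ₁ : ξ₁ ∈ Icc c C) :
    |pseudoDensityDeriv i π₀ π₁ ξ₀ ξ₁ s| ≤ (C - c) * (1 + 4 / ε ^ 2) := by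
  have hπpos : 0 < (π₀ + s * (π₁ - π₀)) ^ 2 := pow_pos (by linarith) 2
  have hiπ : i * π₀ ∈ Icc 0 1 :=
    ⟨mul_nonneg hi.1 (by linarith [hπ₀.1]), mul_le_one₀ hi.2 (by linarith [hπ₀.1]) hπ₀.2⟩
  have hweight : |1 - i * π₀ / (π₀ + s * (π₁ - π₀)) ^ 2| ≤ 1 + 4 / ε ^ 2 := by
    refine abs_one_sub_le_one_add (div_nonneg hiπ.1 hπpos.le) ?_
    rw [div_le_div_iff₀ hπpos (by positivity)]
    nlinarith [hiπ.2]
  rw [pseudoDensityDeriv, abs_mul]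
  exact mul_le_mul (abs_sub_le_of_le_of_le hξ₁.1 hξ₁.2 hξ₀.1 hξ₀.2) hweight (abs_nonneg _)
    (by linarith [hξ₀.1, hξ₀.2])

lemma pseudoDensity_mem_Icc_and_hasDerivAt (hi : i ∈ Icc 0 1) (hε : 0 < ε)
    (hπ₀ : π₀ ∈ Icc ε 1) (hπ₁ : π₁ ∈ Icc 0 1) (hξ₀ : ξ₀ ∈ Icc c C) (hξ₁ : ξ₁ ∈ Icc c C)
    (hs : |s| ≤ ε / 2) (hsc : |s| * ((C - c) * (1 + 2 / ε)) ≤ c / 2) :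
    pseudoDensity i π₀ π₁ ξ₀ ξ₁ s ∈ Icc (c / 2) (C + c / 2) ∧
      HasDerivAt (pseudoDensity i π₀ π₁ ξ₀ ξ₁) (pseudoDensityDeriv i π₀ π₁ ξ₀ ξ₁ s) s ∧
      |pseudoDensityDeriv i π₀ π₁ ξ₀ ξ₁ s| ≤ (C - c) * (1 + 4 / ε ^ 2) := by
  have hπs := half_le_add_mul_sub hπ₀ hπ₁ hε hs
  exact ⟨pseudoDensity_mem_Icc hi hε hπs hξ₀ hξ₁ hsc, hasDerivAt_pseudoDensity (by linarith),
    abs_pseudoDensityDeriv_le hi hε hπ₀ hπs hξ₀ hξ₁⟩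

lemma abs_sub_mul_sub_div_add_le {a b a' b' : ℝ} (ha : a ∈ Icc c C) (hb : b ∈ Icc c C)
    (ha' : a' ∈ Icc c C) (hb' : b' ∈ Icc c C) (hc : 0 < c) :
    |(a - b) * (a' - b') / (b' + b)| ≤ (C - c) * (C - c) / c := by
  have hsum : c ≤ b' + b := by linarith [hb.1, hb'.1]
  have hCc : 0 ≤ C - c := by linarith [ha.1, ha.2]
  rw [abs_div, abs_mul, abs_of_pos (hc.trans_le hsum)]
  exact div_le_div₀ (mul_nonneg hCc hCc) (mul_le_mul (abs_sub_le_of_le_of_le ha.1 ha.2 hb.1 hb.2)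
    (abs_sub_le_of_le_of_le ha'.1 ha'.2 hb'.1 hb'.2) (abs_nonneg _) hCc) hc hsum

end pseudoDensity

lemma eventually_abs_mul_le (M : ℝ) {r : ℝ} (hr : 0 < r) : ∀ᶠ s in 𝓝 (0 : ℝ), |s| * M ≤ r :=
  ((continuous_abs.mul continuous_const).continuousAt.eventually_lt continuousAt_const
    (by simpa using hr)).mono fun _ => le_of_lt

lemma exists_pos_forall_abs_lt_of_eventually {p : ℝ → Prop} (h : ∀ᶠ s in 𝓝 (0 : ℝ), p s) :
    ∃ δ > 0, ∀ s, |s| < δ → p s := by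
  obtain ⟨δ, hδ, h⟩ := Metric.eventually_nhds_iff.1 h
  exact ⟨δ, hδ, fun s hs => h (by rwa [Real.dist_0_eq_abs])⟩

section dominated

variable {α : Type*} [MeasurableSpace α] {μ : Measure α} [IsFiniteMeasure μ]

lemma hasDerivAt_integral_of_abs_deriv_le {F F' : ℝ → α → ℝ} {δ K : ℝ} (hδ : 0 < δ)
    (hF : ∀ x, AEStronglyMeasurable (F x) μ) (hF₀ : Integrable (F 0) μ)
    (hF' : AEStronglyMeasurable (F' 0) μ)
    (h : ∀ᵐ z ∂μ, ∀ x, |x| < δ → HasDerivAt (F · z) (F' x z) x ∧ |F' x z| ≤ K) :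
    HasDerivAt (fun x => ∫ z, F x z ∂μ) (∫ z, F' 0 z ∂μ) 0 := by
  have hball : ∀ x ∈ Metric.ball (0 : ℝ) δ, |x| < δ := fun x hx => by
    simpa [Real.dist_eq] using hx
  refine (hasDerivAt_integral_of_dominated_loc_of_deriv_le (bound := fun _ => K)
    (Metric.ball_mem_nhds 0 hδ) (.of_forall hF) hF₀ hF' ?_ (integrable_const K) ?_).2
  · filter_upwards [h] with z hz x hx using (hz x (hball x hx)).2
  · filter_upwards [h] with z hz x hx using (hz x (hball x hx)).1

lemma integrable_ganLoss {u v : α → ℝ} {L U : ℝ} (hL : 0 < L) (hu : Measurable u)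
    (hv : Measurable v) (h : ∀ᵐ z ∂μ, u z ∈ Icc L U ∧ v z ∈ Icc L U) :
    Integrable (fun z => ganLoss (u z) (v z)) μ := by
  obtain ⟨K, hK⟩ := exists_abs_ganLoss_le (U := U) hL
  refine .of_bound (hu.ganLoss hv).aestronglyMeasurable K ?_
  filter_upwards [h] with z hz using hK _ hz.1 _ hz.2

lemma hasDerivAt_integral_ganLoss_right {u v dv : α → ℝ} {δ L U B : ℝ} (hδ : 0 < δ)
    (hL : 0 < L) (hu : Measurable u) (hv : Measurable v) (hdv : Measurable dv)
    (hdvB : ∀ z, |dv z| ≤ B)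
    (h : ∀ᵐ z ∂μ, u z ∈ Icc L U ∧ ∀ t, |t| < δ → v z + t * dv z ∈ Icc L U) :
    HasDerivAt (fun t => ∫ z, ganLoss (u z) (v z + t * dv z) ∂μ)
      (∫ z, dv z * (log (v z) - log (u z + v z)) ∂μ) 0 := by
  obtain ⟨K, hK⟩ := exists_abs_log_sub_log_add_le (U := U) hL
  have h₀ : ∀ᵐ z ∂μ, u z ∈ Icc L U ∧ v z ∈ Icc L U := by
    filter_upwards [h] with z hz using ⟨hz.1, by simpa using hz.2 0 (by simpa using hδ)⟩
  have := hasDerivAt_integral_of_abs_deriv_le (μ := μ) (K := B * K) hδ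
    (F := fun t z => ganLoss (u z) (v z + t * dv z))
    (F' := fun t z => dv z * (log (v z + t * dv z) - log (u z + (v z + t * dv z))))
    (fun t => (hu.ganLoss (by fun_prop)).aestronglyMeasurable)
    (by simpa using integrable_ganLoss hL hu hv h₀) (by fun_prop) ?_
  · simpa using this
  filter_upwards [h] with z ⟨hu, hv⟩ t ht
  have hvt := hv t ht
  refine ⟨?_, ?_⟩
  · have hpath : HasDerivAt (fun t => v z + t * dv z) (dv z) t := by
      simpa using ((hasDerivAt_id t).mul_const (dv z)).const_add (v z)
    exact ((hasDerivAt_ganLoss_right (hL.trans_le hu.1) (hL.trans_le hvt.1)).comp t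
      hpath).congr_deriv (mul_comm _ _)
  · rw [abs_mul]
    exact mul_le_mul (hdvB z) (hK _ hu _ hvt) (abs_nonneg _) ((abs_nonneg _).trans (hdvB z))

lemma hasDerivAt_integral_mul_log_sub_log_add {w w' : ℝ → α → ℝ} {v dv : α → ℝ}
    {δ L U B K : ℝ} (hδ : 0 < δ) (hL : 0 < L) (hw : ∀ s, Measurable (w s))
    (hw' : Measurable (w' 0)) (hv : Measurable v) (hdv : Measurable dv) (hdvB : ∀ z, |dv z| ≤ B)
    (h : ∀ᵐ z ∂μ, v z ∈ Icc L U ∧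
      ∀ s, |s| < δ → w s z ∈ Icc L U ∧ HasDerivAt (w · z) (w' s z) s ∧ |w' s z| ≤ K) :
    HasDerivAt (fun s => ∫ z, dv z * (log (v z) - log (w s z + v z)) ∂μ)
      (∫ z, -(dv z * w' 0 z / (w 0 z + v z)) ∂μ) 0 := by
  obtain ⟨K₀, hK₀⟩ := exists_abs_log_sub_log_add_le (U := U) hL
  have h0 : |(0 : ℝ)| < δ := by simpa using hδ
  have hF₀ : Integrable (fun z => dv z * (log (v z) - log (w 0 z + v z))) μ := by
    refine .of_bound (by fun_prop) (B * K₀) ?_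
    filter_upwards [h] with z hz
    rw [Real.norm_eq_abs, abs_mul]
    exact mul_le_mul (hdvB z) (hK₀ _ (hz.2 0 h0).1 _ hz.1) (abs_nonneg _)
      ((abs_nonneg _).trans (hdvB z))
  refine hasDerivAt_integral_of_abs_deriv_le (K := B * K / L) hδ
    (F := fun s z => dv z * (log (v z) - log (w s z + v z)))
    (F' := fun s z => -(dv z * w' s z / (w s z + v z))) (fun s => by fun_prop) hF₀
    (Measurable.aestronglyMeasurable (by fun_prop)) ?_
  filter_upwards [h] with z ⟨hv, hw⟩ s hs
  obtain ⟨hws, hderiv, hw'K⟩ := hw s hs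
  have hsum : L ≤ w s z + v z := by linarith [hws.1, hv.1]
  refine ⟨?_, ?_⟩
  · exact ((hasDerivAt_const s (log (v z))).sub ((hderiv.add_const (v z)).log
      (by linarith))).const_mul (dv z) |>.congr_deriv (by ring)
  · rw [abs_neg, abs_div, abs_mul, abs_of_pos (hL.trans_le hsum)]
    have hB : 0 ≤ B := (abs_nonneg _).trans (hdvB z)
    exact div_le_div₀ (mul_nonneg hB ((abs_nonneg _).trans hw'K))
      (mul_le_mul (hdvB z) hw'K (abs_nonneg _) hB) hL hsum

theorem exists_hasDerivAt_integral_ganLoss_pseudoDensity {i π₀ π₁ ξ₀ ξ₁ v₀ v₁ : α → ℝ}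
    {ε c C : ℝ} (hε : 0 < ε) (hc : 0 < c) (hi : Measurable i) (hπ₀ : Measurable π₀)
    (hπ₁ : Measurable π₁) (hξ₀ : Measurable ξ₀) (hξ₁ : Measurable ξ₁) (hv₀ : Measurable v₀)
    (hv₁ : Measurable v₁) (hi_mem : ∀ z, i z ∈ Icc 0 1) (hπ₀_mem : ∀ᵐ z ∂μ, π₀ z ∈ Icc ε 1)
    (hπ₁_mem : ∀ z, π₁ z ∈ Icc 0 1) (hξ₀_mem : ∀ z, ξ₀ z ∈ Icc c C)
    (hξ₁_mem : ∀ z, ξ₁ z ∈ Icc c C) (hv₀_mem : ∀ z, v₀ z ∈ Icc c C)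
    (hv₁_mem : ∀ z, v₁ z ∈ Icc c C) :
    ∃ δ > 0,
      (∀ s t, |s| < δ → |t| < δ → Integrable (fun z =>
        ganLoss (pseudoDensity (i z) (π₀ z) (π₁ z) (ξ₀ z) (ξ₁ z) s)
          (v₀ z + t * (v₁ z - v₀ z))) μ) ∧
      ∃ D : ℝ → ℝ,
        (∀ s, |s| < δ → HasDerivAt (fun t => ∫ z,
          ganLoss (pseudoDensity (i z) (π₀ z) (π₁ z) (ξ₀ z) (ξ₁ z) s)
            (v₀ z + t * (v₁ z - v₀ z)) ∂μ) (D s) 0) ∧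
        HasDerivAt D
          (∫ z, (i z / π₀ z - 1) * ((v₁ z - v₀ z) * (ξ₁ z - ξ₀ z) / (ξ₀ z + v₀ z)) ∂μ) 0 := by
  set w : ℝ → α → ℝ := fun s z => pseudoDensity (i z) (π₀ z) (π₁ z) (ξ₀ z) (ξ₁ z) s
  obtain ⟨δ, hδ, hsmall⟩ := exists_pos_forall_abs_lt_of_eventually <|
    ((by simpa using eventually_abs_mul_le 1 (half_pos hε) : ∀ᶠ s in 𝓝 (0 : ℝ), |s| ≤ ε / 2).and
      (eventually_abs_mul_le ((C - c) * (1 + 2 / ε)) (half_pos hc))).and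
      (eventually_abs_mul_le (C - c) (half_pos hc))
  have hv : ∀ z t, |t| < δ → v₀ z + t * (v₁ z - v₀ z) ∈ Icc (c / 2) (C + c / 2) :=
    fun z t ht => add_mul_sub_mem_Icc (hv₀_mem z) (hv₁_mem z) (hsmall t ht).2
  have hw : ∀ᵐ z ∂μ, ∀ s, |s| < δ → w s z ∈ Icc (c / 2) (C + c / 2) ∧
      HasDerivAt (w · z) (pseudoDensityDeriv (i z) (π₀ z) (π₁ z) (ξ₀ z) (ξ₁ z) s) s ∧
      |pseudoDensityDeriv (i z) (π₀ z) (π₁ z) (ξ₀ z) (ξ₁ z) s| ≤ (C - c) * (1 + 4 / ε ^ 2) := by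
    filter_upwards [hπ₀_mem] with z hz s hs
    exact pseudoDensity_mem_Icc_and_hasDerivAt (hi_mem z) hε hz (hπ₁_mem z) (hξ₀_mem z)
      (hξ₁_mem z) (hsmall s hs).1.1 (hsmall s hs).1.2
  have hdvB : ∀ z, |v₁ z - v₀ z| ≤ C - c := fun z =>
    abs_sub_le_of_le_of_le (hv₁_mem z).1 (hv₁_mem z).2 (hv₀_mem z).1 (hv₀_mem z).2
  have h0 : |(0 : ℝ)| < δ := by simpa using hδ
  refine ⟨δ, hδ, fun s t hs ht => integrable_ganLoss (half_pos hc) (by fun_prop) (by fun_prop)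
      (by filter_upwards [hw] with z hz using ⟨(hz s hs).1, hv z t ht⟩),
    fun s => ∫ z, (v₁ z - v₀ z) * (log (v₀ z) - log (w s z + v₀ z)) ∂μ,
    fun s hs => hasDerivAt_integral_ganLoss_right hδ (half_pos hc) (by fun_prop) hv₀
      (by fun_prop) hdvB (by filter_upwards [hw] with z hz using ⟨(hz s hs).1, hv z⟩), ?_⟩
  refine (hasDerivAt_integral_mul_log_sub_log_add (U := C + c / 2) hδ (half_pos hc)
    (w' := fun s z => pseudoDensityDeriv (i z) (π₀ z) (π₁ z) (ξ₀ z) (ξ₁ z) s)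
    (fun s => by fun_prop) (by fun_prop) hv₀ (by fun_prop) hdvB
    (by filter_upwards [hw] with z hz using ⟨by simpa using hv z 0 h0, hz⟩)).congr_deriv ?_
  congr 1 with z
  simp only [w, pseudoDensity_zero, pseudoDensityDeriv_zero]
  ring

end dominated

section propensity

variable {Ω : Type*} {m₀ : MeasurableSpace Ω} {P : Measure Ω} [IsFiniteMeasure P]

lemma integral_mul_eq_integral_mul_of_condExp_ae_eq {m : MeasurableSpace Ω} (hm : m ≤ m₀)
    {e e' f : Ω → ℝ} {B : ℝ} (he : Integrable e P) (hee' : P[e | m] =ᵐ[P] e')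
    (hf : StronglyMeasurable[m] f) (hfB : ∀ ω, |f ω| ≤ B) :
    ∫ ω, f ω * e ω ∂P = ∫ ω, f ω * e' ω ∂P := by
  have hfe : Integrable (f * e) P :=
    he.bdd_mul (c := B) (hf.mono hm).aestronglyMeasurable (.of_forall hfB)
  calc ∫ ω, f ω * e ω ∂P = ∫ ω, P[f * e | m] ω ∂P := (integral_condExp hm).symm
    _ = ∫ ω, f ω * e' ω ∂P := by
      refine integral_congr_ae ?_
      filter_upwards [condExp_mul_of_stronglyMeasurable_left hf hfe he, hee'] with ω h h'
      rw [h, Pi.mul_apply, h']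

variable {𝒳 : Type*} [MeasurableSpace 𝒳] {X : Ω → 𝒳} {e : Ω → ℝ} {π : 𝒳 → ℝ} {ε : ℝ}

lemma integral_div_sub_one_mul_eq_zero (hX : Measurable X) (he : Integrable e P)
    (hπ : Measurable π)
    (hπe : P[e | MeasurableSpace.comap X inferInstance] =ᵐ[P] fun ω => π (X ω))
    (hε : 0 < ε) (hπε : ∀ᵐ ω ∂P, ε ≤ π (X ω)) {g : 𝒳 → ℝ} {B : ℝ} (hg : Measurable g)
    (hgB : ∀ x, |g x| ≤ B) :
    ∫ ω, (e ω / π (X ω) - 1) * g (X ω) ∂P = 0 := by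
  set h : 𝒳 → ℝ := fun x => g x / max (π x) ε
  have hh : Measurable h := by fun_prop
  have hhB : ∀ x, |h x| ≤ B / ε := fun x => by
    rw [abs_div]
    exact div_le_div₀ ((abs_nonneg _).trans (hgB x)) (hgB x) hε
      ((le_max_right _ _).trans (le_abs_self _))
  have hgX : Integrable (fun ω => g (X ω)) P :=
    .of_bound (hg.comp hX).aestronglyMeasurable B (.of_forall (hgB <| X ·))
  have hhe : Integrable (fun ω => h (X ω) * e ω) P :=
    he.bdd_mul (hh.comp hX).aestronglyMeasurable (.of_forall (hhB <| X ·))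
  have hweight := integral_mul_eq_integral_mul_of_condExp_ae_eq hX.comap_le he hπe
    (hh.comp (comap_measurable X)).stronglyMeasurable (fun ω => hhB (X ω))
  calc ∫ ω, (e ω / π (X ω) - 1) * g (X ω) ∂P = ∫ ω, h (X ω) * e ω - g (X ω) ∂P := by
        refine integral_congr_ae ?_
        filter_upwards [hπε] with ω hω
        have : π (X ω) ≠ 0 := (hε.trans_le hω).ne'
        simp only [h, max_eq_left hω]
        field_simp
    _ = ∫ ω, h (X ω) * π (X ω) ∂P - ∫ ω, g (X ω) ∂P :=
        (integral_sub hhe hgX).trans (congrArg (· - _) hweight)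
    _ = 0 := by
        rw [sub_eq_zero]
        refine integral_congr_ae ?_
        filter_upwards [hπε] with ω hω
        have : π (X ω) ≠ 0 := (hε.trans_le hω).ne'
        simp only [h, max_eq_left hω]
        field_simp

lemma integral_prod_div_sub_one_mul_eq_zero {𝒴 : Type*} [MeasurableSpace 𝒴] {ν : Measure 𝒴}
    [IsFiniteMeasure ν] (hX : Measurable X) (he : Integrable e P) (hπ : Measurable π)
    (hπe : P[e | MeasurableSpace.comap X inferInstance] =ᵐ[P] fun ω => π (X ω))
    (hε : 0 < ε) (hπε : ∀ᵐ ω ∂P, ε ≤ π (X ω)) {q : 𝒴 × 𝒳 → ℝ} {B : ℝ} (hq : Measurable q)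
    (hqB : ∀ r, |q r| ≤ B) :
    ∫ z, (e z.1 / π (X z.1) - 1) * q (z.2, X z.1) ∂(P.prod ν) = 0 := by
  have hweight : Integrable (fun ω => e ω / π (X ω) - 1) P := by
    refine .sub ?_ (integrable_const 1)
    refine (he.bdd_mul (c := ε⁻¹) (f := fun ω => (π (X ω))⁻¹)
      (Measurable.aestronglyMeasurable (by fun_prop)) ?_).congr ?_
    · filter_upwards [hπε] with ω hω
      rw [norm_inv, Real.norm_eq_abs, abs_of_pos (hε.trans_le hω)]
      exact inv_anti₀ hε hω
    · exact .of_forall fun ω => inv_mul_eq_div _ _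
  have hint : Integrable (fun z : Ω × 𝒴 => (e z.1 / π (X z.1) - 1) * q (z.2, X z.1))
      (P.prod ν) := (hweight.comp_fst ν).mul_bdd (c := B)
    (Measurable.aestronglyMeasurable (by fun_prop)) (.of_forall fun z => hqB _)
  have hgB : ∀ x, |∫ y, q (y, x) ∂ν| ≤ B * ν.real univ := fun x => by
    simpa only [Real.norm_eq_abs] using norm_integral_le_of_norm_le_const (μ := ν)
      (f := fun y => q (y, x)) (.of_forall fun y => hqB (y, x))
  rw [integral_prod _ hint]
  simp_rw [integral_const_mul]
  exact integral_div_sub_one_mul_eq_zero hX he hπ hπe hε hπε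
    (hq.stronglyMeasurable.integral_prod_left').measurable hgB

end propensity


theorem gdr_neyman_orthogonality_cgan_general
    {Ω : Type*} [MeasurableSpace Ω]
    (P : Measure Ω) [IsProbabilityMeasure P]
    {𝒳 : Type*} [MeasurableSpace 𝒳]
    {𝒴 : Type*} [MeasurableSpace 𝒴]
    (X : Ω → 𝒳) (hX : Measurable X)
    (A : Ω → Bool) (hA : Measurable A)
    (a : Bool)
    -- propensity score: σ(X)-measurable version of E[𝟙{A = a} | σ(X)]
    (π : 𝒳 → ℝ) (hπmeas : Measurable π)
    (hπver : P[fun ω => (if A ω = a then (1 : ℝ) else 0) |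
        MeasurableSpace.comap X inferInstance] =ᵐ[P] fun ω => π (X ω))
    -- strong overlap
    (ε : ℝ) (hε : 0 < ε)
    (hoverlap : ∀ᵐ ω ∂P, ε ≤ π (X ω) ∧ π (X ω) ≤ 1 - ε)
    -- density setup
    (ν : Measure 𝒴) [IsFiniteMeasure ν]
    (c C : ℝ) (hc : 0 < c)
    (ξ : 𝒴 × 𝒳 → ℝ) (hξmeas : Measurable ξ)
    (hξmem : ∀ q, ξ q ∈ Set.Icc c C)
    -- nuisance estimates
    (πh : 𝒳 → ℝ) (hπhmeas : Measurable πh) (hπhmem : ∀ x, πh x ∈ Set.Icc ε 1)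
    (ξh : 𝒴 × 𝒳 → ℝ) (hξhmeas : Measurable ξh)
    (hξhmem : ∀ q, ξh q ∈ Set.Icc c C)
    -- candidate generator densities of the target model class
    (pstar p : 𝒴 × 𝒳 → ℝ)
    (hpstarmeas : Measurable pstar) (hpstarmem : ∀ q, pstar q ∈ Set.Icc c C)
    (hpmeas : Measurable p) (hpmem : ∀ q, p q ∈ Set.Icc c C) :
    -- perturbed pseudo-density ξ̃_s and perturbed target p_t
    ∀ (ξt : ℝ → Ω → 𝒴 → ℝ) (pt : ℝ → Ω → 𝒴 → ℝ),
      (∀ s ω y, ξt s ω y =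
        ((if A ω = a then (1 : ℝ) else 0) / (π (X ω) + s * (πh (X ω) - π (X ω))))
          * (ξ (y, X ω) - (ξ (y, X ω) + s * (ξh (y, X ω) - ξ (y, X ω))))
        + (ξ (y, X ω) + s * (ξh (y, X ω) - ξ (y, X ω)))) →
      (∀ t ω y, pt t ω y = pstar (y, X ω) + t * (p (y, X ω) - pstar (y, X ω))) →
      ∃ δ > (0 : ℝ),
        -- G is well defined for |s|, |t| < δ
        (∀ s t : ℝ, |s| < δ → |t| < δ →
          Integrable (fun ω => ∫ y,
            ξt s ω y * Real.log (ξt s ω y / (ξt s ω y + pt t ω y))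
            + pt t ω y * Real.log (pt t ω y / (ξt s ω y + pt t ω y)) ∂ν) P)
        ∧
        ∃ D : ℝ → ℝ,
          (∀ s : ℝ, |s| < δ →
            HasDerivAt (fun t : ℝ => ∫ ω, ∫ y,
              ξt s ω y * Real.log (ξt s ω y / (ξt s ω y + pt t ω y))
              + pt t ω y * Real.log (pt t ω y / (ξt s ω y + pt t ω y)) ∂ν ∂P) (D s) 0)
          ∧ HasDerivAt D 0 0 := by
  intro ξt pt hξt hpt
  obtain rfl := funext₃ hξt
  obtain rfl := funext₃ hpt
  set e : Ω → ℝ := fun ω => if A ω = a then 1 else 0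
  have he : Measurable e := measurable_const.ite (hA (measurableSet_singleton a)) measurable_const
  have he_mem : ∀ ω, e ω ∈ Icc 0 1 := fun ω => by simp only [e]; split_ifs <;> norm_num
  have hπ_mem : ∀ᵐ ω ∂P, π (X ω) ∈ Icc ε 1 := hoverlap.mono fun _ h => ⟨h.1, by linarith [h.2]⟩
  obtain ⟨δ, hδ, hint, D, hD, hD'⟩ := exists_hasDerivAt_integral_ganLoss_pseudoDensity
    (μ := P.prod ν) (i := fun z => e z.1) (π₀ := fun z => π (X z.1)) (π₁ := fun z => πh (X z.1))
    (ξ₀ := fun z => ξ (z.2, X z.1)) (ξ₁ := fun z => ξh (z.2, X z.1))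
    (v₀ := fun z => pstar (z.2, X z.1)) (v₁ := fun z => p (z.2, X z.1)) hε hc (by fun_prop)
    (by fun_prop) (by fun_prop) (by fun_prop) (by fun_prop) (by fun_prop) (by fun_prop)
    (fun z => he_mem z.1)
    (Measure.quasiMeasurePreserving_fst.ae hπ_mem)
    (fun z => ⟨hε.le.trans (hπhmem _).1, (hπhmem _).2⟩) (fun z => hξmem _) (fun z => hξhmem _)
    (fun z => hpstarmem _) (fun z => hpmem _)
  refine ⟨δ, hδ, fun s t hs ht => (hint s t hs ht).integral_prod_left, D, fun s hs =>
    (hD s hs).congr_of_eventuallyEq ?_, ?_⟩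
  · filter_upwards [Metric.ball_mem_nhds (0 : ℝ) hδ] with t ht
    exact (integral_prod _ (hint s t hs (by simpa using ht))).symm
  · convert hD'
    exact (integral_prod_div_sub_one_mul_eq_zero hX
      (.of_bound he.aestronglyMeasurable 1 (.of_forall fun ω =>
        abs_le.2 ⟨by linarith [(he_mem ω).1], (he_mem ω).2⟩))
      hπmeas hπver hε (hπ_mem.mono fun _ h => h.1)
      (q := fun r => (p r - pstar r) * (ξh r - ξ r) / (ξ r + pstar r)) (by fun_prop)
      fun r => abs_sub_mul_sub_div_add_le (hpmem r) (hpstarmem r) (hξhmem r) (hξmem r) hc).symm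

/-- Neyman-orthogonality of the GDR risk for conditional GANs (with the optimal
discriminator plugged in): with perturbed nuisances `π_s := π_a + s(π̂ − π_a)`,
`ξ_s := ξ + s(ξ̂ − ξ)`, perturbed pseudo-density
`ξ̃_s(X, A, y) := (𝟙{A = a}/π_s(X))(ξ(y|X) − ξ_s(y|X)) + ξ_s(y|X)`, and perturbed target
`p_t := p* + t(p − p*)`, the risk
`G(s, t) := E[∫ (ξ̃_s log(ξ̃_s/(ξ̃_s + p_t)) + p_t log(p_t/(ξ̃_s + p_t))) dν]`
is well defined for `|s|, |t| < δ` (some δ > 0) and the mixed pathwise derivative vanishes: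
`(d/ds)|₀ (d/dt)|₀ G(s, t) = 0`. -/
theorem gdr_neyman_orthogonality_cgan
    {Ω : Type*} [MeasurableSpace Ω]
    (P : Measure Ω) [IsProbabilityMeasure P]
    {𝒳 : Type*} [MeasurableSpace 𝒳] [StandardBorelSpace 𝒳]
    {𝒴 : Type*} [MeasurableSpace 𝒴] [StandardBorelSpace 𝒴]
    (X : Ω → 𝒳) (hX : Measurable X)
    (A : Ω → Bool) (hA : Measurable A)
    (Y : Ω → 𝒴) (hY : Measurable Y)
    (a : Bool)
    -- propensity score: σ(X)-measurable version of E[𝟙{A = a} | σ(X)]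
    (π : 𝒳 → ℝ) (hπmeas : Measurable π)
    (hπver : P[fun ω => (if A ω = a then (1 : ℝ) else 0) |
        MeasurableSpace.comap X inferInstance] =ᵐ[P] fun ω => π (X ω))
    -- strong overlap
    (ε : ℝ) (hε : 0 < ε)
    (hoverlap : ∀ᵐ ω ∂P, ε ≤ π (X ω) ∧ π (X ω) ≤ 1 - ε)
    -- density setup
    (ν : Measure 𝒴) [IsFiniteMeasure ν]
    (c C : ℝ) (hc : 0 < c) (hcC : c ≤ C)
    (ξ : 𝒴 × 𝒳 → ℝ) (hξmeas : Measurable ξ)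
    (hξmem : ∀ q, ξ q ∈ Set.Icc c C)
    (hξnorm : ∀ x, ∫ y, ξ (y, x) ∂ν = 1)
    -- ξ is the conditional outcome density
    (hξdens : ∀ f : 𝒴 × 𝒳 → ℝ, Measurable f → (∃ B : ℝ, ∀ q, |f q| ≤ B) →
      ∫ ω, (if A ω = a then (1 : ℝ) else 0) * f (Y ω, X ω) ∂P
        = ∫ ω, π (X ω) * ∫ y, f (y, X ω) * ξ (y, X ω) ∂ν ∂P)
    -- nuisance estimates
    (πh : 𝒳 → ℝ) (hπhmeas : Measurable πh) (hπhmem : ∀ x, πh x ∈ Set.Icc ε 1)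
    (ξh : 𝒴 × 𝒳 → ℝ) (hξhmeas : Measurable ξh)
    (hξhmem : ∀ q, ξh q ∈ Set.Icc c C)
    (hξhnorm : ∀ x, ∫ y, ξh (y, x) ∂ν = 1)
    -- candidate generator densities of the target model class
    (pstar p : 𝒴 × 𝒳 → ℝ)
    (hpstarmeas : Measurable pstar) (hpstarmem : ∀ q, pstar q ∈ Set.Icc c C)
    (hpstarnorm : ∀ x, ∫ y, pstar (y, x) ∂ν = 1)
    (hpmeas : Measurable p) (hpmem : ∀ q, p q ∈ Set.Icc c C)
    (hpnorm : ∀ x, ∫ y, p (y, x) ∂ν = 1) :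
    -- perturbed pseudo-density ξ̃_s and perturbed target p_t
    ∀ (ξt : ℝ → Ω → 𝒴 → ℝ) (pt : ℝ → Ω → 𝒴 → ℝ),
      (∀ s ω y, ξt s ω y =
        ((if A ω = a then (1 : ℝ) else 0) / (π (X ω) + s * (πh (X ω) - π (X ω))))
          * (ξ (y, X ω) - (ξ (y, X ω) + s * (ξh (y, X ω) - ξ (y, X ω))))
        + (ξ (y, X ω) + s * (ξh (y, X ω) - ξ (y, X ω)))) →
      (∀ t ω y, pt t ω y = pstar (y, X ω) + t * (p (y, X ω) - pstar (y, X ω))) →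
      ∃ δ > (0 : ℝ),
        -- G is well defined for |s|, |t| < δ
        (∀ s t : ℝ, |s| < δ → |t| < δ →
          Integrable (fun ω => ∫ y,
            ξt s ω y * Real.log (ξt s ω y / (ξt s ω y + pt t ω y))
            + pt t ω y * Real.log (pt t ω y / (ξt s ω y + pt t ω y)) ∂ν) P)
        ∧
        ∃ D : ℝ → ℝ,
          (∀ s : ℝ, |s| < δ →
            HasDerivAt (fun t : ℝ => ∫ ω, ∫ y,
              ξt s ω y * Real.log (ξt s ω y / (ξt s ω y + pt t ω y))
              + pt t ω y * Real.log (pt t ω y / (ξt s ω y + pt t ω y)) ∂ν ∂P) (D s) 0)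
          ∧ HasDerivAt D 0 0 :=
  gdr_neyman_orthogonality_cgan_general P X hX A hA a π hπmeas hπver ε hε hoverlap ν c C hc ξ hξmeas
    hξmem πh hπhmeas hπhmem ξh hξhmeas hξhmem pstar p hpstarmeas hpstarmem hpmeas hpmem
end
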